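/- Let G be a d-regular graph with d ≥ 3, and let U be a subset of V(G) with |U| ≥ d + 1 and |V(G) ∖ U| ≥ d + 1. If the number of edges between U and V(G) ∖ U is at most d − 1, then λ₂(G) ≥ d − 2(d−1)/(d+1); in particular λ₂(G) > d − 2. -/

import Mathlib

open Classical in
/-- The adjacency matrix of a finite simple graph (over `ℝ`) is Hermitian. -/
lemma adjMatrix_isHermitian {V : Type*} [Fintype V] (G : SimpleGraph V) [DecidableRel G.Adj] :
    (G.adjMatrix ℝ).IsHermitian := by
  ext i j
  simp [Matrix.conjTranspose_apply, SimpleGraph.adj_comm]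

open Classical in
/-- The multiset of adjacency eigenvalues (with multiplicity) of a finite simple graph. -/
noncomputable def adjEigenvalues {V : Type*} [Fintype V] (G : SimpleGraph V) : Multiset ℝ :=
  Finset.univ.val.map (adjMatrix_isHermitian G).eigenvalues

open Classical in
/-- `lambda2 G` is the second largest adjacency eigenvalue (with multiplicity) of `G`:
the second entry of the list of all eigenvalues sorted in decreasing order, i.e. the entry at
position `|V| - 2` (0-indexed) of the increasingly sorted list. -/
noncomputable def lambda2 {V : Type*} [Fintype V] (G : SimpleGraph V) : ℝ :=
  ((adjEigenvalues G).sort (· ≤ ·)).getD (Fintype.card V - 2) 0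

/-- The number of ordered pairs `(u, v)` of adjacent vertices of `G` with `u ∈ A` and `v ∈ B`.
For disjoint sets `A` and `B` this is `e_G(A, B)`, the number of edges between `A` and `B`;
for `A = B` it is twice the number of edges of `G` inside `A`. -/
noncomputable def crossPairs {V : Type*} (G : SimpleGraph V) (A B : Set V) : ℕ :=
  {p : V × V | p.1 ∈ A ∧ p.2 ∈ B ∧ G.Adj p.1 p.2}.ncard

/-!
Write `A` for the adjacency matrix. For a two-valued vector `z = a·1_U + b·1_{V∖U}`, the
Laplacian identity `zᵀAz = d‖z‖² - ∑_{uv ∈ E} (z_u - z_v)²` gives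
`zᵀAz = d‖z‖² - e(U, V∖U)(a - b)²`, and `(a - b)² ≤ 2(a² + b²)` together with `|U|, |V∖U| ≥ d + 1`
bounds the Rayleigh quotient of `z` below by `d - 2(d-1)/(d+1)`. Choosing `(a, b) ≠ 0` makes `z`
orthogonal to any prescribed vector, in particular to a top eigenvector, so by the min-max
principle the second largest eigenvalue obeys the same bound.
-/

open Finset Matrix
open scoped RealInnerProductSpace

namespace LinearMap.IsSymmetric

variable {E : Type*} [NormedAddCommGroup E] [InnerProductSpace ℝ E] [FiniteDimensional ℝ E]
  {T : E →ₗ[ℝ] E} (hT : T.IsSymmetric) {n : ℕ} (hn : Module.finrank ℝ E = n)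

theorem inner_self_map_eq_sum_eigenvalues (z : E) :
    ⟪z, T z⟫ = ∑ i, hT.eigenvalues hn i * ⟪hT.eigenvectorBasis hn i, z⟫ ^ 2 := by
  rw [← (hT.eigenvectorBasis hn).sum_inner_mul_inner z (T z)]
  refine Fintype.sum_congr _ _ fun i ↦ ?_
  rw [← hT, apply_eigenvectorBasis, RCLike.ofReal_real_eq_id, id_eq, real_inner_smul_left,
    real_inner_comm]
  ring

theorem exists_le_eigenvalues_of_le_inner_self_map {r : ℝ} {z : E} (hz : z ≠ 0)
    (hr : r * ‖z‖ ^ 2 ≤ ⟪z, T z⟫) :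
    ∃ i, ⟪hT.eigenvectorBasis hn i, z⟫ ≠ 0 ∧ r ≤ hT.eigenvalues hn i := by
  have hsum := hT.inner_self_map_eq_sum_eigenvalues hn z
  set b := hT.eigenvectorBasis hn
  by_contra! h
  obtain ⟨j, hj⟩ : ∃ j, ⟪b j, z⟫ ≠ 0 := by
    by_contra! h0
    exact hz (b.toBasis.ext_elem fun j ↦ by simpa [b.repr_apply_apply] using h0 j)
  have hlt : ⟪z, T z⟫ < r * ‖z‖ ^ 2 := by
    rw [hsum, ← b.sum_sq_inner_right, mul_sum]
    refine sum_lt_sum (fun i _ ↦ ?_) ⟨j, mem_univ j, ?_⟩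
    · by_cases hi : ⟪b i, z⟫ = 0
      · simp [hi]
      · exact mul_le_mul_of_nonneg_right (h i hi).le (sq_nonneg _)
    · exact mul_lt_mul_of_pos_right (h j hj) (by positivity)
  linarith

/-- The case `k = 2` of the Courant–Fischer min-max principle. -/
theorem le_eigenvalues_one_of_inner_eigenvectorBasis_zero_eq_zero (h1 : 1 < n) {r : ℝ} {z : E}
    (hz : z ≠ 0) (horth : ⟪hT.eigenvectorBasis hn ⟨0, by omega⟩, z⟫ = 0)
    (hr : r * ‖z‖ ^ 2 ≤ ⟪z, T z⟫) : r ≤ hT.eigenvalues hn ⟨1, h1⟩ := by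
  obtain ⟨i, hi, hri⟩ := hT.exists_le_eigenvalues_of_le_inner_self_map hn hz hr
  have hi0 : i ≠ ⟨0, by omega⟩ := by
    rintro rfl
    exact hi horth
  exact hri.trans (hT.eigenvalues_antitone hn (Fin.le_def.mpr (Nat.one_le_iff_ne_zero.mpr
    fun h ↦ hi0 (Fin.ext h))))

end LinearMap.IsSymmetric

namespace Matrix.IsHermitian

variable {n : Type*} [Fintype n] [DecidableEq n] {A : Matrix n n ℝ}

theorem map_eigenvalues_univ (hA : A.IsHermitian) :
    univ.val.map hA.eigenvalues = ↑(List.ofFn hA.eigenvalues₀) := by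
  have : hA.eigenvalues = hA.eigenvalues₀ ∘ (Fintype.equivOfCardEq (Fintype.card_fin _)).symm :=
    rfl
  rw [this, ← Multiset.map_map]
  simp

theorem sort_map_eigenvalues_univ (hA : A.IsHermitian) :
    (univ.val.map hA.eigenvalues).sort (· ≤ ·) = (List.ofFn hA.eigenvalues₀).reverse := by
  rw [map_eigenvalues_univ, ← Multiset.coe_reverse, Multiset.coe_sort]
  apply List.mergeSort_eq_self
  simpa [List.pairwise_reverse] using hA.eigenvalues₀_antitone.sortedGE_ofFn.pairwise

theorem le_eigenvalues₀_one (hA : A.IsHermitian) (h1 : 1 < Fintype.card n) {r : ℝ}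
    (h : ∀ v : n → ℝ, ∃ z : n → ℝ, z ≠ 0 ∧ v ⬝ᵥ z = 0 ∧ r * (z ⬝ᵥ z) ≤ z ⬝ᵥ (A *ᵥ z)) :
    r ≤ hA.eigenvalues₀ ⟨1, h1⟩ := by
  have hT := isSymmetric_toEuclideanLin_iff.mpr hA
  obtain ⟨z, hz, horth, hr⟩ :=
    h (WithLp.ofLp (hT.eigenvectorBasis finrank_euclideanSpace ⟨0, by omega⟩))
  refine hT.le_eigenvalues_one_of_inner_eigenvectorBasis_zero_eq_zero _ h1
    (z := WithLp.toLp 2 z) (by simpa using hz) ?_ ?_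
  · rw [EuclideanSpace.inner_eq_star_dotProduct, star_trivial, dotProduct_comm]
    exact horth
  · rw [EuclideanSpace.real_norm_sq_eq, EuclideanSpace.inner_eq_star_dotProduct, star_trivial]
    convert hr using 1
    · simp [dotProduct, sq]
    · exact dotProduct_comm _ _

end Matrix.IsHermitian

theorem lambda2_eq_eigenvalues₀ {V : Type*} [Fintype V] [DecidableEq V] (G : SimpleGraph V)
    [DecidableRel G.Adj] (hV : 1 < Fintype.card V) :
    lambda2 G = (adjMatrix_isHermitian G).eigenvalues₀ ⟨1, hV⟩ := by
  have hsort : (adjEigenvalues G).sort (· ≤ ·) =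
      (List.ofFn (adjMatrix_isHermitian G).eigenvalues₀).reverse := by
    rw [← Matrix.IsHermitian.sort_map_eigenvalues_univ, adjEigenvalues]
    congr!
  rw [lambda2, hsort, List.getD_eq_getElem _ _ (by simp; omega), List.getElem_reverse,
    List.getElem_ofFn]
  congr 2
  rw [List.length_ofFn]
  omega

theorem dotProduct_ite_mem {V R : Type*} [Fintype V] [DecidableEq V] [CommSemiring R]
    (w : V → R) (U : Finset V) (a b : R) :
    w ⬝ᵥ (fun x ↦ if x ∈ U then a else b) = a * ∑ x ∈ U, w x + b * ∑ x ∈ Uᶜ, w x := by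
  rw [dotProduct, ← sum_add_sum_compl U, mul_sum, mul_sum]
  congr 1 <;> refine sum_congr rfl fun x hx ↦ ?_
  · rw [if_pos hx, mul_comm]
  · rw [if_neg (mem_compl.mp hx), mul_comm]

theorem mul_add_mul_le_sub_mul_sq {a b c d m₁ m₂ : ℝ} (hd : 1 ≤ d) (hc : c ≤ d - 1)
    (h₁ : d + 1 ≤ m₁) (h₂ : d + 1 ≤ m₂) :
    (d - 2 * (d - 1) / (d + 1)) * (a ^ 2 * m₁ + b ^ 2 * m₂) ≤
      d * (a ^ 2 * m₁ + b ^ 2 * m₂) - c * (a - b) ^ 2 := by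
  have hd₁ : 0 < d + 1 := by linarith
  suffices c * (a - b) ^ 2 ≤ 2 * (d - 1) / (d + 1) * (a ^ 2 * m₁ + b ^ 2 * m₂) by linarith
  calc c * (a - b) ^ 2 ≤ (d - 1) * (2 * (a ^ 2 + b ^ 2)) :=
        mul_le_mul hc (by nlinarith [sq_nonneg (a + b)]) (sq_nonneg _) (by linarith)
    _ = 2 * (d - 1) / (d + 1) * (a ^ 2 * (d + 1) + b ^ 2 * (d + 1)) := by field_simp
    _ ≤ 2 * (d - 1) / (d + 1) * (a ^ 2 * m₁ + b ^ 2 * m₂) := by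
        have : 0 ≤ 2 * (d - 1) / (d + 1) := div_nonneg (by linarith) hd₁.le
        gcongr

namespace SimpleGraph

variable {V : Type*}

theorem crossPairs_comm (G : SimpleGraph V) (A B : Set V) :
    crossPairs G A B = crossPairs G B A := by
  rw [crossPairs, crossPairs, ← Set.ncard_image_of_injective _ Prod.swap_injective]
  congr 1
  ext ⟨u, v⟩
  simp [G.adj_comm, and_left_comm]

variable [Fintype V] {G : SimpleGraph V} [DecidableRel G.Adj]

theorem crossPairs_eq_sum {R : Type*} [AddCommMonoidWithOne R] (A B : Set V)
    [DecidablePred (· ∈ A)] [DecidablePred (· ∈ B)] :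
    (crossPairs G A B : R) = ∑ i, ∑ j, if i ∈ A ∧ j ∈ B ∧ G.Adj i j then 1 else 0 := by
  rw [crossPairs, Set.ncard_eq_toFinset_card', Set.toFinset_ofPred, card_filter,
    ← Fintype.sum_prod_type']
  push_cast
  rfl

theorem sum_adj_sq_sub_ite_mem {R : Type*} [CommRing R] [DecidableEq V] (U : Finset V)
    (a b : R) :
    (∑ i, ∑ j, if G.Adj i j then
      ((if i ∈ U then a else b) - (if j ∈ U then a else b)) ^ 2 else 0) =
      2 * crossPairs G ↑U (↑U)ᶜ * (a - b) ^ 2 := by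
  have hsplit : ∀ i j, (if G.Adj i j then
      ((if i ∈ U then a else b) - (if j ∈ U then a else b)) ^ 2 else 0) =
      ((if i ∈ (↑U : Set V) ∧ j ∈ (↑U : Set V)ᶜ ∧ G.Adj i j then 1 else 0) +
        (if i ∈ (↑U : Set V)ᶜ ∧ j ∈ (↑U : Set V) ∧ G.Adj i j then 1 else 0)) * (a - b) ^ 2 := by
    intro i j
    by_cases hi : i ∈ U <;> by_cases hj : j ∈ U <;> by_cases hij : G.Adj i j <;> simp [*]
    ring
  simp_rw [hsplit, ← sum_mul, sum_add_distrib, ← crossPairs_eq_sum, crossPairs_comm G (↑U)ᶜ]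
  ring

namespace IsRegularOfDegree

variable {d : ℕ}

theorem dotProduct_adjMatrix_mulVec {R : Type*} [Field R] [CharZero R]
    (hreg : G.IsRegularOfDegree d) (x : V → R) :
    x ⬝ᵥ (G.adjMatrix R *ᵥ x) =
      d * (x ⬝ᵥ x) - (∑ i, ∑ j, if G.Adj i j then (x i - x j) ^ 2 else 0) / 2 := by
  classical
  rw [← lapMatrix_toLinearMap₂', toLinearMap₂'_apply', lapMatrix, sub_mulVec, dotProduct_sub,
    dotProduct_mulVec_degMatrix]
  simp [hreg.degree_eq, dotProduct, mul_sum, mul_assoc]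

theorem dotProduct_adjMatrix_mulVec_ite_mem {R : Type*} [Field R] [CharZero R] [DecidableEq V]
    (hreg : G.IsRegularOfDegree d) (U : Finset V) (a b : R) :
    let z : V → R := fun x ↦ if x ∈ U then a else b
    z ⬝ᵥ (G.adjMatrix R *ᵥ z) = d * (z ⬝ᵥ z) - crossPairs G ↑U (↑U)ᶜ * (a - b) ^ 2 := by
  intro z
  rw [hreg.dotProduct_adjMatrix_mulVec, sum_adj_sq_sub_ite_mem]
  ring

theorem exists_orthogonal_le_dotProduct_adjMatrix_mulVec [DecidableEq V]
    (hreg : G.IsRegularOfDegree d) (hd : 1 ≤ d)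
    {U : Finset V} (hU : d + 1 ≤ #U) (hUc : d + 1 ≤ #Uᶜ)
    (hcut : (crossPairs G ↑U (↑U)ᶜ : ℝ) ≤ d - 1) (v : V → ℝ) :
    ∃ z : V → ℝ, z ≠ 0 ∧ v ⬝ᵥ z = 0 ∧
      ((d : ℝ) - 2 * ((d : ℝ) - 1) / ((d : ℝ) + 1)) * (z ⬝ᵥ z) ≤ z ⬝ᵥ (G.adjMatrix ℝ *ᵥ z) := by
  obtain ⟨a, b, hab, horth⟩ :
      ∃ a b : ℝ, (a, b) ≠ 0 ∧ a * ∑ x ∈ U, v x + b * ∑ x ∈ Uᶜ, v x = 0 := by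
    by_cases h : ∑ x ∈ U, v x = 0 ∧ ∑ x ∈ Uᶜ, v x = 0
    · exact ⟨1, 0, by simp, by simp [h.1]⟩
    · exact ⟨∑ x ∈ Uᶜ, v x, -∑ x ∈ U, v x, by simpa [and_comm] using h, by ring⟩
  set z : V → ℝ := fun x ↦ if x ∈ U then a else b
  have hzz : z ⬝ᵥ z = a ^ 2 * #U + b ^ 2 * #Uᶜ := by
    rw [dotProduct_ite_mem, sum_congr rfl fun x hx ↦ if_pos hx,
      sum_congr rfl fun x hx ↦ if_neg (mem_compl.mp hx)]
    simp only [sum_const, nsmul_eq_mul]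
    ring
  have hd' : (1 : ℝ) ≤ d := by exact_mod_cast hd
  have hU' : (d : ℝ) + 1 ≤ #U := by exact_mod_cast hU
  have hUc' : (d : ℝ) + 1 ≤ #Uᶜ := by exact_mod_cast hUc
  refine ⟨z, fun hz ↦ hab ?_, by rw [dotProduct_ite_mem, horth], ?_⟩
  · have : a ^ 2 * #U + b ^ 2 * #Uᶜ = 0 := by rw [← hzz, hz, zero_dotProduct]
    have ha : a = 0 := by nlinarith [sq_nonneg a, sq_nonneg b]
    have hb : b = 0 := by nlinarith [sq_nonneg a, sq_nonneg b]
    rw [ha, hb]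
    rfl
  · rw [hreg.dotProduct_adjMatrix_mulVec_ite_mem, hzz]
    exact mul_add_mul_le_sub_mul_sq hd' hcut hU' hUc'

end IsRegularOfDegree

end SimpleGraph

/-- If `G` is a `d`-regular graph (`d ≥ 3`) and `U` is a vertex subset with `|U| ≥ d + 1` and
`|V(G) \ U| ≥ d + 1` such that at most `d - 1` edges join `U` to its complement, then
`λ₂(G) ≥ d - 2(d-1)/(d+1)`; in particular `λ₂(G) > d - 2`. -/
theorem lambda2_of_small_edge_cut {V : Type*} [Fintype V] (G : SimpleGraph V)
    [DecidableRel G.Adj]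
    (d : ℕ) (hd : 3 ≤ d) (hreg : G.IsRegularOfDegree d) (U : Finset V)
    (hU : d + 1 ≤ U.card) (hUc : d + 1 ≤ (↑U : Set V)ᶜ.ncard)
    (hcut : crossPairs G ↑U (↑U : Set V)ᶜ ≤ d - 1) :
    (d : ℝ) - 2 * ((d : ℝ) - 1) / ((d : ℝ) + 1) ≤ lambda2 G ∧ (d : ℝ) - 2 < lambda2 G := by
  classical
  have hV : 1 < Fintype.card V := by
    have := card_le_univ U
    omega
  rw [← coe_compl, Set.ncard_coe_finset] at hUc
  have hcut' : (crossPairs G ↑U (↑U)ᶜ : ℝ) ≤ d - 1 := by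
    rw [← Nat.cast_one, ← Nat.cast_sub (by omega)]
    exact_mod_cast hcut
  have hlambda2 : (d : ℝ) - 2 * ((d : ℝ) - 1) / ((d : ℝ) + 1) ≤ lambda2 G := by
    rw [lambda2_eq_eigenvalues₀ G hV]
    exact (adjMatrix_isHermitian G).le_eigenvalues₀_one hV
      (hreg.exists_orthogonal_le_dotProduct_adjMatrix_mulVec (by omega) hU hUc hcut')
  refine ⟨hlambda2, lt_of_lt_of_le ?_ hlambda2⟩
  have : 2 * ((d : ℝ) - 1) / ((d : ℝ) + 1) < 2 := by
    rw [div_lt_iff₀ (by positivity)]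
    linarith
  linarith
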